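/- arXiv:1504.06758 — 10 statements merged into one kernel-verified Lean document; each statement's English description precedes it below -/
import Mathlib

section
/- Let P be a semifield, B = (b_{ij}) an n×n integer matrix, y_1,...,y_n ∈ P, d_k a positive integer, and Z_k(u) = Σ_{s=0}^{d_k} z_{k,s} u^s with z_{k,s} ∈ P and z_{k,0} = z_{k,d_k} = 1. Define the mutated coefficients by y'_k = y_k^{-1} and, for j ≠ k, y'_j = y_j (y_k^{d_k})^{[b_{kj}]_+} Z_k|_P(y_k)^{-b_{kj}}, where Z_k|_P(y_k) = ⊕_{s=0}^{d_k} z_{k,s} y_k^s is evaluated using the semifield addition. With B' = μ_k^D(B) the generalized mutation of B and Z'_k = reversed polynomial \bar Z_k (coefficients z'_{k,s} = z_{k,d_k-s}), applying the same mutation rule again returns the original coefficients: y''_j = y_j for all j. -/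
structure SemifieldAux (P : Type*) [CommGroup P] where
  add : P → P → P
  add_comm : ∀ a b, add a b = add b a
  add_assoc : ∀ a b c, add (add a b) c = add a (add b c)
  mul_add : ∀ a b c, a * add b c = add (a * b) (a * c)

def osum {P : Type*} [CommGroup P] (S : SemifieldAux P) : ℕ → (ℕ → P) → P
  | 0, f => f 0
  | n + 1, f => S.add (osum S n f) (f (n + 1))

lemma osum_congr {P : Type*} [CommGroup P] (S : SemifieldAux P) (n : ℕ)
    (f g : ℕ → P) (h : ∀ i ≤ n, f i = g i) : osum S n f = osum S n g := by
  induction n with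
  | zero => exact h 0 le_rfl
  | succ m ih =>
      simp only [osum]
      rw [ih (fun i hi => h i (hi.trans (Nat.le_succ m))), h (m+1) le_rfl]

lemma osum_shift {P : Type*} [CommGroup P] (S : SemifieldAux P) (n : ℕ) (f : ℕ → P) :
    osum S (n + 1) f = S.add (f 0) (osum S n (fun i => f (i + 1))) := by
  induction n with
  | zero => rfl
  | succ m ih =>
      show S.add (osum S (m+1) f) (f (m+2)) = _
      rw [ih, S.add_assoc]
      rfl

lemma osum_rev {P : Type*} [CommGroup P] (S : SemifieldAux P) (n : ℕ) (f : ℕ → P) :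
    osum S n (fun s => f (n - s)) = osum S n f := by
  induction n with
  | zero => rfl
  | succ m ih =>
      rw [osum_shift]
      have h : (fun i => f (m + 1 - (i + 1))) = fun i => f (m - i) := by
        funext i; congr 1; omega
      rw [h, ih, Nat.sub_zero, S.add_comm]
      rfl

lemma osum_mul {P : Type*} [CommGroup P] (S : SemifieldAux P) (c : P) (n : ℕ) (f : ℕ → P) :
    c * osum S n f = osum S n (fun s => c * f s) := by
  induction n with
  | zero => rfl
  | succ m ih =>
      show c * S.add (osum S m f) (f (m+1)) = _
      rw [S.mul_add, ih]
      rfl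

lemma gen_y_aux {P : Type*} [CommGroup P] (yj x Z : P) (a c d b : ℤ)
    (h : a - c - d * b = 0) :
    yj * x ^ a * Z ^ (-b) * x⁻¹ ^ c * (Z * (x ^ d)⁻¹) ^ b = yj := by
  have hx : x ^ a * (x⁻¹ ^ c * ((x ^ d)⁻¹) ^ b) = 1 := by
    rw [inv_zpow, ← zpow_neg, ← zpow_neg, ← zpow_mul, ← zpow_add, ← zpow_add]
    have he : a + (-c + -d * b) = 0 := by linear_combination h
    rw [he, zpow_zero]
  calc yj * x ^ a * Z ^ (-b) * x⁻¹ ^ c * (Z * (x ^ d)⁻¹) ^ b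
      = yj * (Z ^ (-b) * Z ^ b) * (x ^ a * (x⁻¹ ^ c * ((x ^ d)⁻¹) ^ b)) := by
        rw [mul_zpow]; simp only [mul_comm, mul_left_comm, mul_assoc]
    _ = yj := by rw [hx, ← zpow_add, neg_add_cancel, zpow_zero, mul_one, mul_one]

/-- Generalized coefficient (`y`-variable) mutation is involutive: mutating in
direction `k` twice (with the exchange polynomial coefficients reversed and the
exchange matrix mutated in between) returns the original coefficients. -/
theorem gen_y_mutation_involutive {n : ℕ} {P : Type*} [CommGroup P]
    (S : SemifieldAux P) (B : Matrix (Fin n) (Fin n) ℤ) (k : Fin n)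
    (dk : ℕ) (hdk : 0 < dk) (z : ℕ → P) (hz0 : z 0 = 1) (hzd : z dk = 1)
    (y : Fin n → P) :
    let pp : ℤ → ℤ := fun t => max t 0
    let Zy : P := osum S dk (fun s => z s * y k ^ s)
    let y' : Fin n → P := fun j => if j = k then (y k)⁻¹
      else y j * y k ^ ((dk : ℤ) * pp (B k j)) * Zy ^ (-(B k j))
    let z' : ℕ → P := fun s => z (dk - s)
    let B' : Matrix (Fin n) (Fin n) ℤ := fun i j => if i = k ∨ j = k then -B i j
      else B i j + (max (B i k) 0) * (dk : ℤ) * B k j + B i k * (dk : ℤ) * (max (-(B k j)) 0)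
    let Zy' : P := osum S dk (fun s => z' s * y' k ^ s)
    let y'' : Fin n → P := fun j => if j = k then (y' k)⁻¹
      else y' j * y' k ^ ((dk : ℤ) * pp (B' k j)) * Zy' ^ (-(B' k j))
    ∀ j, y'' j = y j := by
  intro pp Zy y' z' B' Zy' y'' j
  have hy'k : y' k = (y k)⁻¹ := by simp [y']
  have hZy' : Zy' = Zy * (y k ^ (dk : ℤ))⁻¹ := by
    have h1 : y k ^ (dk : ℤ) * Zy' = Zy := by
      show y k ^ (dk : ℤ) * osum S dk (fun s => z' s * y' k ^ s) = Zy
      rw [osum_mul]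
      rw [osum_congr S dk _ (fun s => (fun t => z t * y k ^ t) (dk - s)) ?_]
      · exact osum_rev S dk (fun t => z t * y k ^ t)
      · intro s hs
        simp only [z', hy'k]
        rw [inv_pow, ← zpow_natCast (y k) s, ← zpow_natCast (y k) (dk - s), ← zpow_neg]
        have h2 : ((dk - s : ℕ) : ℤ) = (dk : ℤ) + -(s:ℤ) := by omega
        rw [h2, zpow_add]
        simp only [mul_comm, mul_left_comm, mul_assoc]
    rw [← h1, mul_comm (y k ^ (dk : ℤ)) Zy', mul_inv_cancel_right]
  by_cases hj : j = k
  · subst hj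
    simp only [y'', if_pos rfl, hy'k, inv_inv]
  · have hB' : B' k j = -B k j := by simp [B']
    have hm : max (B k j) 0 - max (-(B k j)) 0 = B k j := by
      rcases le_total (B k j) 0 with h | h <;>
        simp [max_eq_left, max_eq_right, h] <;> omega
    simp only [y'', if_neg hj, hB', hy'k, hZy', neg_neg]
    simp only [y', if_neg hj]
    exact gen_y_aux (y j) (y k) Zy _ _ _ _
      (by simp only [pp]; linear_combination (dk : ℤ) * hm)
end

section
/- Let F be a field, x_1,...,x_n, y_1,...,y_n nonzero elements of F with (x_i) algebraically independent, B an n×n integer matrix, d_k a positive integer, and Z_k(u) = Σ_{s=0}^{d_k} z_{k,s} u^s a polynomial with nonzero coefficients in F and z_{k,0} = z_{k,d_k} = 1. Set ŷ_k = y_k ∏_i x_i^{b_{ik}} and define x'_k by x'_k x_k = (∏_i x_i^{[-b_{ik}]_+})^{d_k} · Z_k(ŷ_k) / N_k for any fixed nonzero scalar N_k, keeping x'_i = x_i for i ≠ k, y'_k = y_k^{-1}, B' = μ_k^D(B), Z'_k = \bar Z_k (reversed coefficients), and N'_k = N_k / y_k^{d_k} (corresponding to \bar Z_k|_P(y_k^{-1})).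 Then applying the same exchange relation to the new seed returns x''_k = x_k. That is, the generalized exchange relation is involutive. -/
/-!
Mutation negates the `k`-th column of `B` and `B k k = 0`, so `ŷ'_k = ŷ_k⁻¹` and the monomial
`∏ᵢ x'_i^{[-b'_{ik}]₊}` equals `∏ᵢ x_i^{[b_{ik}]₊} = ∏ᵢ x_i^{[-b_{ik}]₊} · ∏ᵢ x_i^{b_{ik}}`.
The reversed polynomial satisfies `Z̄_k(ŷ_k⁻¹) = ŷ_k^{-d_k} Z_k(ŷ_k)`, and the factor
`y_k^{d_k}` in `N'_k` exactly cancels the `y_k` part of `ŷ_k^{-d_k}`. Hence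
`x''_k x'_k = (∏ᵢ x_i^{[-b_{ik}]₊})^{d_k} Z_k(ŷ_k) / N_k = x'_k x_k`.
-/

open Finset

lemma prod_zpow_update_of_eq_zero {ι G : Type*} [Fintype ι] [DecidableEq ι]
    [DivisionCommMonoid G] (x : ι → G) (k : ι) (a : G) (e : ι → ℤ) (he : e k = 0) :
    ∏ i, Function.update x k a i ^ e i = ∏ i, x i ^ e i := by
  refine prod_congr rfl fun i _ => ?_
  by_cases h : i = k
  · subst h
    simp [he]
  · rw [Function.update_of_ne h]

lemma prod_zpow_max_zero {ι G : Type*} [Fintype ι] [CommGroupWithZero G]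
    (x : ι → G) (hx : ∀ i, x i ≠ 0) (e : ι → ℤ) :
    ∏ i, x i ^ max (e i) 0 = (∏ i, x i ^ max (-e i) 0) * ∏ i, x i ^ e i := by
  rw [← prod_mul_distrib]
  refine prod_congr rfl fun i _ => ?_
  rw [← zpow_add₀ (hx i)]
  congr 1
  omega

lemma pow_mul_sum_range_reflect_inv_pow {K : Type*} [Field K] (w : ℕ → K) (d : ℕ)
    {u : K} (hu : u ≠ 0) :
    u ^ d * ∑ s ∈ range (d + 1), w (d - s) * u⁻¹ ^ s = ∑ s ∈ range (d + 1), w s * u ^ s := by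
  rw [mul_sum, ← sum_range_reflect (fun s => w s * u ^ s)]
  refine sum_congr rfl fun s hs => ?_
  have hsd : s ≤ d := Nat.lt_succ_iff.mp (mem_range.mp hs)
  rw [show d + 1 - 1 - s = d - s by omega, inv_pow, pow_sub₀ _ hu hsd]
  ring

theorem gen_exchange_involutive_general {n : ℕ} {F : Type*} [Field F]
    (x y : Fin n → F) (hx : ∀ i, x i ≠ 0) (hy : ∀ i, y i ≠ 0)
    (B : Matrix (Fin n) (Fin n) ℤ) (k : Fin n) (hBkk : B k k = 0)
    (dk : ℕ)
    (z : ℕ → F)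
    (Nk : F) (hNk : Nk ≠ 0) :
    let pp : ℤ → ℤ := fun t => max t 0
    -- evaluation of the exchange polynomial with coefficients `w`
    let Zev : (ℕ → F) → F → F := fun w u => ∑ s ∈ Finset.range (dk + 1), w s * u ^ s
    -- `ŷ_k = y_k ∏ᵢ x_i^{b_{ik}}`
    let yhk : F := y k * ∏ i, x i ^ (B i k)
    Zev z yhk ≠ 0 →
    -- mutated cluster: `x'_k x_k = (∏ᵢ x_i^{[-b_{ik}]₊})^{d_k} Z_k(ŷ_k)/N_k`
    let x' : Fin n → F := fun i => if i = k then
        ((∏ i, x i ^ pp (-(B i k))) ^ dk * Zev z yhk / Nk) / x k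
      else x i
    -- reversed exchange polynomial coefficients
    let z' : ℕ → F := fun s => z (dk - s)
    -- new normalization, corresponding to `Z̄_k|_P(y_k⁻¹) = y_k^{-d_k} Z_k|_P(y_k)`
    let Nk' : F := Nk / y k ^ (dk : ℤ)
    -- mutated exchange matrix `μ_k^D(B)`
    let B' : Matrix (Fin n) (Fin n) ℤ := fun i j => if i = k ∨ j = k then -B i j
      else B i j + pp (B i k) * (dk : ℤ) * B k j + B i k * (dk : ℤ) * pp (-(B k j))
    -- `ŷ'_k = y'_k ∏ᵢ (x'_i)^{b'_{ik}}` with `y'_k = y_k⁻¹`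
    let yhk' : F := (y k)⁻¹ * ∏ i, x' i ^ (B' i k)
    -- second application of the exchange relation
    let x'' : F := ((∏ i, x' i ^ pp (-(B' i k))) ^ dk * Zev z' yhk' / Nk') / x' k
    x'' = x k := by
  intro pp Zev yhk hZ x' z' Nk' B' yhk' x''
  set P := ∏ i, x i ^ pp (-(B i k))
  set R := ∏ i, x i ^ B i k
  have hR : R ≠ 0 := prod_ne_zero_iff.mpr fun i _ => zpow_ne_zero _ (hx i)
  have hP : P ≠ 0 := prod_ne_zero_iff.mpr fun i _ => zpow_ne_zero _ (hx i)
  have hyhk : yhk ≠ 0 := mul_ne_zero (hy k) hR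
  have hxk' : x' k = (P ^ dk * Zev z yhk / Nk) / x k := if_pos rfl
  have hx' : x' = Function.update x k (P ^ dk * Zev z yhk / Nk / x k) :=
    funext fun i => (Function.update_apply x k _ i).symm
  have hcol : ∀ i, B' i k = -B i k := fun i => if_pos (Or.inr rfl)
  have hyhk' : yhk' = yhk⁻¹ := by
    simp only [yhk', yhk, hx', hcol]
    rw [prod_zpow_update_of_eq_zero _ _ _ _ (by simp [hBkk])]
    simp only [zpow_neg, prod_inv_distrib, mul_inv]
  have hmono' : ∏ i, x' i ^ pp (-(B' i k)) = P * R := by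
    simp only [hx', hcol, neg_neg]
    rw [prod_zpow_update_of_eq_zero _ _ _ _ (by simp [pp, hBkk])]
    exact prod_zpow_max_zero x hx _
  have hZrev : Zev z' yhk' = (yhk ^ dk)⁻¹ * Zev z yhk := by
    rw [hyhk', eq_inv_mul_iff_mul_eq₀ (pow_ne_zero _ hyhk)]
    exact pow_mul_sum_range_reflect_inv_pow z dk hyhk
  simp only [x'', hmono', hZrev, hxk', Nk', zpow_natCast]
  generalize Zev z yhk = Zk at hZ ⊢
  rw [show yhk = y k * R from rfl]
  field_simp
  rw [div_eq_iff (pow_ne_zero _ (mul_ne_zero hR (hy k)))]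
  ring

/-- The generalized exchange relation is involutive: applying the exchange
relation in direction `k` to the mutated seed (with reversed exchange
polynomial, mutated exchange matrix, and normalization `N'_k = N_k / y_k^{d_k}`)
returns the original cluster variable `x_k`. -/
theorem gen_exchange_involutive {n : ℕ} {F : Type*} [Field F]
    (x y : Fin n → F) (hx : ∀ i, x i ≠ 0) (hy : ∀ i, y i ≠ 0)
    (hxalg : AlgebraicIndependent ℤ x)
    (B : Matrix (Fin n) (Fin n) ℤ) (k : Fin n) (hBkk : B k k = 0)
    (dk : ℕ) (hdk : 0 < dk)
    (z : ℕ → F) (hz : ∀ s, z s ≠ 0) (hz0 : z 0 = 1) (hzd : z dk = 1)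
    (Nk : F) (hNk : Nk ≠ 0) :
    let pp : ℤ → ℤ := fun t => max t 0
    -- evaluation of the exchange polynomial with coefficients `w`
    let Zev : (ℕ → F) → F → F := fun w u => ∑ s ∈ Finset.range (dk + 1), w s * u ^ s
    -- `ŷ_k = y_k ∏ᵢ x_i^{b_{ik}}`
    let yhk : F := y k * ∏ i, x i ^ (B i k)
    Zev z yhk ≠ 0 →
    -- mutated cluster: `x'_k x_k = (∏ᵢ x_i^{[-b_{ik}]₊})^{d_k} Z_k(ŷ_k)/N_k`
    let x' : Fin n → F := fun i => if i = k then
        ((∏ i, x i ^ pp (-(B i k))) ^ dk * Zev z yhk / Nk) / x k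
      else x i
    -- reversed exchange polynomial coefficients
    let z' : ℕ → F := fun s => z (dk - s)
    -- new normalization, corresponding to `Z̄_k|_P(y_k⁻¹) = y_k^{-d_k} Z_k|_P(y_k)`
    let Nk' : F := Nk / y k ^ (dk : ℤ)
    -- mutated exchange matrix `μ_k^D(B)`
    let B' : Matrix (Fin n) (Fin n) ℤ := fun i j => if i = k ∨ j = k then -B i j
      else B i j + pp (B i k) * (dk : ℤ) * B k j + B i k * (dk : ℤ) * pp (-(B k j))
    -- `ŷ'_k = y'_k ∏ᵢ (x'_i)^{b'_{ik}}` with `y'_k = y_k⁻¹`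
    let yhk' : F := (y k)⁻¹ * ∏ i, x' i ^ (B' i k)
    -- second application of the exchange relation
    let x'' : F := ((∏ i, x' i ^ pp (-(B' i k))) ^ dk * Zev z' yhk' / Nk') / x' k
    x'' = x k :=
  gen_exchange_involutive_general x y hx hy B k hBkk dk z Nk hNk
end

section
/- Let B^t be an n×n integer matrix, D = diag(d_1,...,d_n) with positive integers d_i, and let C^t be an integer matrix. Define C^{t'} by the generalized c-vector recursion: c^{t'}_{ij} = -c^t_{ik} if j = k, and c^{t'}_{ij} = c^t_{ij} + c^t_{ik}[d_k b^t_{kj}]_+ + [-c^t_{ik}]_+ d_k b^t_{kj} if j ≠ k. Define ^R C^t = D^{-1} C^t D entrywise, i.e. (^R C^t)_{ij} = d_i^{-1} c^t_{ij} d_j (assumed integral). Then ^R C^{t'} is obtained from ^R C^t by the ordinary c-vector recursion with respect to the matrix B^t D: (^R C^{t'})_{ij} = -(^R C^t)_{ik} if j = k, and (^R C^{t'})_{ij} = (^R C^t)_{ij} + (^R C^t)_{ik}[(B^t D)_{kj}]_+ + [-(^R C^t)_{ik}]_+ (B^t D)_{kj} if j ≠ k. -/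
/-- `[x]₊ = max(x,0)`. -/
def ppart (x : ℤ) : ℤ := max x 0

lemma ppart_mul_pos_left (a x : ℤ) (ha : 0 < a) : a * ppart x = ppart (a * x) := by
  unfold ppart
  rw [mul_max_of_nonneg _ _ ha.le, mul_zero]

lemma ppart_mul_pos_right (a x : ℤ) (ha : 0 < a) : ppart x * a = ppart (x * a) := by
  unfold ppart
  rw [max_mul_of_nonneg _ _ ha.le, zero_mul]

/-- The generalized `c`-vector recursion corresponds, under the transformation
`^R C = D⁻¹ C D`, to the ordinary `c`-vector recursion for the
right-companion exchange matrix `B·D`. -/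
theorem right_companion_c_vectors {n : ℕ}
    (B C RC : Matrix (Fin n) (Fin n) ℤ) (d : Fin n → ℤ) (hd : ∀ i, 0 < d i)
    (k : Fin n) (hRC : ∀ i j, d i * RC i j = C i j * d j) :
    -- generalized c-vector recursion
    let C' : Matrix (Fin n) (Fin n) ℤ := fun i j => if j = k then -C i k
      else C i j + C i k * ppart (d k * B k j) + ppart (-(C i k)) * (d k * B k j)
    -- ordinary c-vector recursion for the exchange matrix `B·D`
    let RC' : Matrix (Fin n) (Fin n) ℤ := fun i j => if j = k then -RC i k
      else RC i j + RC i k * ppart (B k j * d j) + ppart (-(RC i k)) * (B k j * d j)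
    ∀ i j, d i * RC' i j = C' i j * d j := by
  intro C' RC' i j
  simp only [C', RC']
  by_cases h : j = k
  · simp [h, mul_neg, neg_mul, hRC i k]
  · simp only [h, if_false]
    have h1 : d i * (RC i k * ppart (B k j * d j)) = C i k * ppart (d k * B k j) * d j := by
      rw [← mul_assoc, hRC i k, mul_assoc, ppart_mul_pos_left _ _ (hd k),
        ← mul_assoc (d k), ← ppart_mul_pos_right _ _ (hd j), mul_assoc]
    have h2 : d i * (ppart (-RC i k) * (B k j * d j))
        = ppart (-C i k) * (d k * B k j) * d j := by
      rw [← mul_assoc, ppart_mul_pos_left _ _ (hd i), mul_neg, hRC i k, ← neg_mul,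
        ← ppart_mul_pos_right _ _ (hd k)]
      ring
    rw [mul_add, mul_add, h1, h2, hRC i j, add_mul, add_mul]
end

section
/- One-step binomial specialization (key step of Theorem 1): let R be a commutative ring (of Laurent polynomials in variables y_1,...,y_n), let d_1,...,d_n be positive integers, B^t an integer matrix, C^t an integer matrix, and suppose F_1,...,F_n, G_1,...,G_n are invertible elements of R with F_i = G_i^{d_i} for all i. Define F'_k = F_k^{-1} (∏_i y_i^{[-c^t_{ik}]_+} F_i^{[-b^t_{ik}]_+})^{d_k} Σ_{s=0}^{d_k} C(d_k, s) (∏_i y_i^{c^t_{ik}} F_i^{b^t_{ik}})^s, and G'_k = G_k^{-1} (∏_i y_i^{[-c^t_{ik}]_+} G_i^{[-d_i b^t_{ik}]_+}) (1 + ∏_i y_i^{c^t_{ik}} G_i^{d_i b^t_{ik}}). Then F'_k = (G'_k)^{d_k}. -/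
/-- One-step binomial specialization: if the generalized `F`-polynomials `Fᵢ`
are `dᵢ`-th powers of the left-companion `F`-polynomials `Gᵢ`, then the
generalized `F`-recursion with binomial coefficients produces the `d_k`-th
power of the ordinary `F`-recursion for the left companion. -/
theorem binomial_specialization_step {n : ℕ} {R : Type*} [CommRing R]
    (d : Fin n → ℕ) (hd : ∀ i, 0 < d i)
    (B C : Matrix (Fin n) (Fin n) ℤ) (k : Fin n)
    (y F G : Fin n → Rˣ) (hFG : ∀ i, F i = G i ^ (d i)) :
    -- generalized F-recursion with `z_{k,s} = C(d_k, s)`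
    let F' : R := (((F k)⁻¹ *
        (∏ i, y i ^ ppart (-(C i k)) * F i ^ ppart (-(B i k))) ^ d k : Rˣ) : R) *
      ∑ s ∈ Finset.range (d k + 1), ((d k).choose s : R) *
        (((∏ i, y i ^ (C i k) * F i ^ (B i k) : Rˣ) : R)) ^ s
    -- ordinary F-recursion for the left companion (exchange matrix `D·B`)
    let G' : R := (((G k)⁻¹ *
        ∏ i, y i ^ ppart (-(C i k)) * G i ^ ppart (-((d i : ℤ) * B i k)) : Rˣ) : R) *
      (1 + ((∏ i, y i ^ (C i k) * G i ^ ((d i : ℤ) * B i k) : Rˣ) : R))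
    F' = G' ^ d k := by
  intro F' G'
  set Q : Rˣ := ∏ i, y i ^ (C i k) * G i ^ ((d i : ℤ) * B i k) with hQdef
  have hQ : (∏ i, y i ^ (C i k) * F i ^ (B i k) : Rˣ) = Q := by
    refine Finset.prod_congr rfl fun i _ => ?_
    rw [hFG i, ← zpow_natCast, ← zpow_mul]
  have hP : (∏ i, y i ^ ppart (-(C i k)) * F i ^ ppart (-(B i k)) : Rˣ)
      = ∏ i, y i ^ ppart (-(C i k)) * G i ^ ppart (-((d i : ℤ) * B i k)) := by
    refine Finset.prod_congr rfl fun i _ => ?_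
    have hp : ppart (-((d i : ℤ) * B i k)) = (d i : ℤ) * ppart (-(B i k)) := by
      have h0 : (0:ℤ) ≤ (d i : ℤ) := Int.natCast_nonneg _
      simp only [ppart]
      rw [mul_max_of_nonneg _ _ h0, mul_zero, mul_neg]
    rw [hFG i, ← zpow_natCast, ← zpow_mul, hp]
  have hF : (F k)⁻¹ = ((G k)⁻¹) ^ (d k) := by rw [hFG k, inv_pow]
  have hsum : (∑ s ∈ Finset.range (d k + 1), ((d k).choose s : R) * ((Q : R)) ^ s)
      = (1 + (Q : R)) ^ d k := by
    rw [add_comm (1:R) (Q:R), add_pow]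
    exact Finset.sum_congr rfl fun s _ => by simp [mul_comm]
  simp only [F', G', hQ, hP, hF, hsum]
  rw [hQdef]
  push_cast [mul_pow]
  ring
end

section
/- One-step zero specialization (key step of Theorem 2): let R be a commutative ring, d_1,...,d_n positive integers, B^t, C^t integer matrices such that ^R c^t_{ik} := d_i^{-1} c^t_{ik} d_k is an integer for all i,k, and suppose F_1,...,F_n, H_1,...,H_n are invertible elements of R with F_i(y) = H_i(Y) where Y_i = y_i^{d_i} (i.e. F_i equals H_i after substituting Y_i = y_i^{d_i}). Define F'_k = F_k^{-1} (∏_i y_i^{[-c^t_{ik}]_+} F_i^{[-b^t_{ik}]_+})^{d_k} (1 + (∏_i y_i^{c^t_{ik}} F_i^{b^t_{ik}})^{d_k}) and H'_k = H_k^{-1} (∏_i Y_i^{[-^R c^t_{ik}]_+} H_i^{[-b^t_{ik} d_k]_+}) (1 + ∏_i Y_i^{^R c^t_{ik}} H_i^{b^t_{ik} d_k}). Then F'_k(y) = H'_k(Y) under the same substitution Y_i = y_i^{d_i}. -/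
lemma ppart_mul_nonneg (m x : ℤ) (hm : 0 ≤ m) : ppart (m * x) = m * ppart x := by
  unfold ppart
  rcases le_or_gt x 0 with h | h
  · rw [max_eq_right h, max_eq_right (mul_nonpos_of_nonneg_of_nonpos hm h), mul_zero]
  · rw [max_eq_left h.le, max_eq_left (mul_nonneg hm h.le)]

/-- One-step zero specialization: if the generalized `F`-polynomials `Fᵢ` (in
the variables `yᵢ`) agree with the right-companion `F`-polynomials `Hᵢ` under
the substitution `Yᵢ = yᵢ^{dᵢ}`, then the generalized `F`-recursion with middle
exchange-polynomial coefficients set to zero (so `Z_k(u) = 1 + u^{d_k}`) again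
agrees with the ordinary `F`-recursion for the right companion `B·D`. -/
theorem zero_specialization_step {n : ℕ} {R : Type*} [CommRing R]
    (d : Fin n → ℕ) (hd : ∀ i, 0 < d i)
    (B C RC : Matrix (Fin n) (Fin n) ℤ) (k : Fin n)
    (hRC : ∀ i, (d i : ℤ) * RC i k = C i k * d k)
    (y Y F H : Fin n → Rˣ)
    (hY : ∀ i, Y i = y i ^ (d i)) (hFH : ∀ i, F i = H i) :
    -- generalized F-recursion with z specialized to 0, i.e. `Z_k(u) = 1 + u^{d_k}`
    let F' : R := (((F k)⁻¹ *
        (∏ i, y i ^ ppart (-(C i k)) * F i ^ ppart (-(B i k))) ^ d k : Rˣ) : R) *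
      (1 + (((∏ i, y i ^ (C i k) * F i ^ (B i k) : Rˣ) ^ d k : Rˣ) : R))
    -- ordinary F-recursion for the right companion (exchange matrix `B·D`,
    -- c-vectors `^R C`, variables `Yᵢ = yᵢ^{dᵢ}`)
    let H' : R := (((H k)⁻¹ *
        ∏ i, Y i ^ ppart (-(RC i k)) * H i ^ ppart (-(B i k * d k)) : Rˣ) : R) *
      (1 + ((∏ i, Y i ^ (RC i k) * H i ^ (B i k * d k) : Rˣ) : R))
    F' = H' := by
  intro F' H'
  have hdk : (0:ℤ) ≤ (d k : ℤ) := Int.ofNat_nonneg _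
  have hy : ∀ i (a b : ℤ), (d i : ℤ) * b = a * d k →
      (y i ^ a) ^ (d k) = Y i ^ b := by
    intro i a b hab
    rw [hY i, ← zpow_natCast (y i ^ a) (d k), ← zpow_mul,
      ← zpow_natCast (y i) (d i), ← zpow_mul, show (a * (d k : ℤ) = (d i : ℤ) * b) from hab.symm]
  have hF : ∀ i (b : ℤ), (F i ^ b) ^ (d k) = H i ^ (b * d k) := by
    intro i b
    rw [hFH i, ← zpow_natCast (H i ^ b) (d k), ← zpow_mul]
  have key1 : (∏ i, y i ^ ppart (-(C i k)) * F i ^ ppart (-(B i k))) ^ d k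
      = ∏ i, Y i ^ ppart (-(RC i k)) * H i ^ ppart (-(B i k * d k)) := by
    rw [← Finset.prod_pow]
    refine Finset.prod_congr rfl fun i _ => ?_
    rw [mul_pow, hy i _ (ppart (-(RC i k)))
      (by rw [← ppart_mul_nonneg _ _ (Int.ofNat_nonneg (d i)),
            mul_comm (ppart (-(C i k))), ← ppart_mul_nonneg _ _ hdk,
            mul_neg, mul_neg, hRC i, mul_comm]),
      hF i, mul_comm (ppart (-(B i k))) (d k : ℤ),
      ← ppart_mul_nonneg _ _ hdk, mul_neg, mul_comm (d k : ℤ)]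
  have key2 : (∏ i, y i ^ (C i k) * F i ^ (B i k)) ^ d k
      = ∏ i, Y i ^ (RC i k) * H i ^ (B i k * d k) := by
    rw [← Finset.prod_pow]
    refine Finset.prod_congr rfl fun i _ => ?_
    rw [mul_pow, hy i _ (RC i k) (hRC i), hF i]
  show _ = _
  simp only [F', H', key1, key2, hFH k]
end

section
/- Let P be a semifield and consider a generalized seed mutation in direction k with ŷ_k = y_k ∏_i x_i^{b_{ik}} in the ambient field F. With x'_i defined by the generalized exchange relation (x'_k x_k = (∏_i x_i^{[-b_{ik}]_+})^{d_k} Z_k(ŷ_k)/Z_k|_P(y_k), x'_i = x_i for i ≠ k), y'_j defined by the generalized coefficient mutation, and B' = μ_k^D(B), the new hatted coefficients ŷ'_j = y'_j ∏_i (x'_i)^{b'_{ij}} satisfy: ŷ'_k = ŷ_k^{-1}, and for j ≠ k, ŷ'_j = ŷ_j (ŷ_k^{d_k})^{[b_{kj}]_+} Z_k(ŷ_k)^{-b_{kj}}. -/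
/-!
The exchange relation only enters through the product `x'_k x_k`: replacing `x_k` by `x'_k` and
negating the exponent of `x_k` multiplies a Laurent monomial by `(x'_k x_k)^{b'_{kj}}`. For `ŷ'_k`
this factor is trivial because `b_{kk} = 0`. For `j ≠ k`, the exponents satisfy
`b'_{ij} = b_{ij} + d_k b_{ik} [b_{kj}]_+ + d_k b_{kj} [-b_{ik}]_+` for `i ≠ k`; the last summand is
cancelled by the factor `(∏ x_i^{[-b_{ik}]_+})^{d_k}` of `x'_k x_k`, the normalization
`Z_k|_P(y_k)` cancels against the one in `y'_j`, and what remains is `Z_k(ŷ_k)^{-b_{kj}}`.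
-/

section Monomials

variable {ι G : Type*} [Fintype ι] [CommGroupWithZero G]

lemma prod_zpow_add {x : ι → G} (hx : ∀ i, x i ≠ 0) (e f : ι → ℤ) :
    ∏ i, x i ^ (e i + f i) = (∏ i, x i ^ e i) * ∏ i, x i ^ f i := by
  rw [← Finset.prod_mul_distrib]
  exact Finset.prod_congr rfl fun i _ => zpow_add₀ (hx i) _ _

lemma prod_zpow_mul (x : ι → G) (e : ι → ℤ) (m : ℤ) :
    ∏ i, x i ^ (e i * m) = (∏ i, x i ^ e i) ^ m := by
  simp only [zpow_mul, Finset.prod_zpow]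

lemma prod_zpow_exchange [DecidableEq ι] {x x' : ι → G} {e e' : ι → ℤ} {k : ι}
    (hxk : x k ≠ 0) (hx : ∀ i ≠ k, x' i = x i) (he : ∀ i ≠ k, e' i = e i) (hek : e' k = -e k) :
    ∏ i, x' i ^ e' i = (x' k * x k) ^ e' k * ∏ i, x i ^ e i := by
  have hrest : ∏ i ∈ {k}ᶜ, x' i ^ e' i = ∏ i ∈ {k}ᶜ, x i ^ e i :=
    Finset.prod_congr rfl fun i hi => by
      have hik : i ≠ k := by simpa using hi
      rw [hx i hik, he i hik]
  rw [Fintype.prod_eq_mul_prod_compl k, Fintype.prod_eq_mul_prod_compl k (fun i => x i ^ e i),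
    hrest, hek, mul_zpow, mul_assoc, ← mul_assoc (x k ^ (-e k)), ← zpow_add₀ hxk, neg_add_cancel,
    zpow_zero, one_mul]

end Monomials

lemma max_zero_mutation_identity (a b d : ℤ) :
    max a 0 * d * b + a * d * max (-b) 0 = a * (d * max b 0) + d * b * max (-a) 0 := by
  have ha : max a 0 = max (-a) 0 + a := by omega
  have hb : max b 0 = max (-b) 0 + b := by omega
  rw [ha, hb]; ring

theorem hatted_coefficient_mutation_general {n : ℕ} {F : Type*} [Field F]
    (x y : Fin n → F) (hx : ∀ i, x i ≠ 0)
    (B : Matrix (Fin n) (Fin n) ℤ) (k : Fin n) (hBkk : B k k = 0)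
    (dk : ℕ)
    (z : ℕ → F)
    (Nk : F) (hNk : Nk ≠ 0) :
    let pp : ℤ → ℤ := fun t => max t 0
    -- `Z_k(u) = Σ_{s=0}^{d_k} z_s u^s`
    let Zev : F → F := fun u => ∑ s ∈ Finset.range (dk + 1), z s * u ^ s
    -- the hatted coefficients
    let yh : Fin n → F := fun j => y j * ∏ i, x i ^ (B i j)
    Zev (yh k) ≠ 0 →
    -- the generalized exchange relation
    let x' : Fin n → F := fun i => if i = k then
        ((∏ i, x i ^ pp (-(B i k))) ^ dk * Zev (yh k) / Nk) / x k
      else x i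
    -- the generalized coefficient mutation (with `Z_k|_P(y_k) = Nk`)
    let y' : Fin n → F := fun j => if j = k then (y k)⁻¹
      else y j * y k ^ ((dk : ℤ) * pp (B k j)) * Nk ^ (-(B k j))
    -- the mutated exchange matrix `μ_k^D(B)`
    let B' : Matrix (Fin n) (Fin n) ℤ := fun i j => if i = k ∨ j = k then -B i j
      else B i j + pp (B i k) * (dk : ℤ) * B k j + B i k * (dk : ℤ) * pp (-(B k j))
    -- the new hatted coefficients
    let yh' : Fin n → F := fun j => y' j * ∏ i, x' i ^ (B' i j)
    yh' k = (yh k)⁻¹ ∧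
    ∀ j, j ≠ k →
      yh' j = yh j * yh k ^ ((dk : ℤ) * pp (B k j)) * Zev (yh k) ^ (-(B k j)) := by
  intro pp Zev yh _ x' y' B' yh'
  set Q := (∏ i, x i ^ pp (-(B i k))) ^ dk
  have hexchange : x' k * x k = Q * Zev (yh k) / Nk := by
    rw [show x' k = Q * Zev (yh k) / Nk / x k from if_pos rfl, div_mul_cancel₀ _ (hx k)]
  have hx' : ∀ i ≠ k, x' i = x i := fun i hi => if_neg hi
  have hB'k : ∀ i, B' i k = -B i k := fun i => if_pos (Or.inr rfl)
  constructor
  · have hprod : ∏ i, x' i ^ B' i k = (∏ i, x i ^ B i k)⁻¹ := by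
      rw [prod_zpow_exchange (e := fun i => -B i k) (hx k) hx' (fun i _ => hB'k i)
        (by rw [hB'k, hBkk, neg_zero, neg_zero]), hB'k, hBkk]
      simp only [neg_zero, zpow_zero, one_mul, zpow_neg, Finset.prod_inv_distrib]
    simp only [yh', yh, hprod, y', if_pos, mul_inv]
  · intro j hj
    set b := B k j
    set m := (dk : ℤ) * pp b
    have hB'kj : B' k j = -b := if_pos (Or.inl rfl)
    have hB'ij : ∀ i ≠ k, B' i j = B i j + B i k * m + pp (-(B i k)) * (dk * b) := by
      intro i hi
      simp only [B', hi, hj, or_self, if_false, m, pp]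
      linarith [max_zero_mutation_identity (B i k) b dk]
    have hprod : ∏ i, x' i ^ B' i j
        = (Q * Zev (yh k) / Nk) ^ (-b) * ((∏ i, x i ^ B i j) * (∏ i, x i ^ B i k) ^ m * Q ^ b) := by
      rw [prod_zpow_exchange (hx k) hx' hB'ij (by simp [hB'kj, hBkk, pp, b]), hexchange, hB'kj,
        prod_zpow_add hx, prod_zpow_add hx, prod_zpow_mul, prod_zpow_mul, zpow_mul _ (dk : ℤ) b,
        zpow_natCast]
    have hQ : Q ≠ 0 := pow_ne_zero _ (Finset.prod_ne_zero_iff.mpr fun i _ => zpow_ne_zero _ (hx i))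
    have hcancel : (Q * Zev (yh k) / Nk) ^ (-b) * Q ^ b * Nk ^ (-b) = Zev (yh k) ^ (-b) := by
      simp only [div_zpow, mul_zpow, zpow_neg]
      field_simp
    simp only [yh', hprod, y', if_neg hj]
    rw [mul_zpow (y k)]
    linear_combination (y j * y k ^ m * (∏ i, x i ^ B i j) * (∏ i, x i ^ B i k) ^ m) * hcancel

/-- The hatted coefficients `ŷⱼ = yⱼ ∏ᵢ xᵢ^{b_{ij}}` mutate like the
coefficients, but in the ambient field: `ŷ'_k = ŷ_k⁻¹` and, for `j ≠ k`,
`ŷ'_j = ŷ_j (ŷ_k^{d_k})^{[b_{kj}]₊} Z_k(ŷ_k)^{-b_{kj}}`.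
Here `Nk` plays the role of the normalization `Z_k|_P(y_k) ∈ P`. -/
theorem hatted_coefficient_mutation {n : ℕ} {F : Type*} [Field F]
    (x y : Fin n → F) (hx : ∀ i, x i ≠ 0) (hy : ∀ i, y i ≠ 0)
    (B : Matrix (Fin n) (Fin n) ℤ) (k : Fin n) (hBkk : B k k = 0)
    (dk : ℕ) (hdk : 0 < dk)
    (z : ℕ → F) (hz0 : z 0 = 1) (hzd : z dk = 1)
    (Nk : F) (hNk : Nk ≠ 0) :
    let pp : ℤ → ℤ := fun t => max t 0
    -- `Z_k(u) = Σ_{s=0}^{d_k} z_s u^s`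
    let Zev : F → F := fun u => ∑ s ∈ Finset.range (dk + 1), z s * u ^ s
    -- the hatted coefficients
    let yh : Fin n → F := fun j => y j * ∏ i, x i ^ (B i j)
    Zev (yh k) ≠ 0 →
    -- the generalized exchange relation
    let x' : Fin n → F := fun i => if i = k then
        ((∏ i, x i ^ pp (-(B i k))) ^ dk * Zev (yh k) / Nk) / x k
      else x i
    -- the generalized coefficient mutation (with `Z_k|_P(y_k) = Nk`)
    let y' : Fin n → F := fun j => if j = k then (y k)⁻¹
      else y j * y k ^ ((dk : ℤ) * pp (B k j)) * Nk ^ (-(B k j))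
    -- the mutated exchange matrix `μ_k^D(B)`
    let B' : Matrix (Fin n) (Fin n) ℤ := fun i j => if i = k ∨ j = k then -B i j
      else B i j + pp (B i k) * (dk : ℤ) * B k j + B i k * (dk : ℤ) * pp (-(B k j))
    -- the new hatted coefficients
    let yh' : Fin n → F := fun j => y' j * ∏ i, x' i ^ (B' i j)
    yh' k = (yh k)⁻¹ ∧
    ∀ j, j ≠ k →
      yh' j = yh j * yh k ^ ((dk : ℤ) * pp (B k j)) * Zev (yh k) ^ (-(B k j)) :=
  hatted_coefficient_mutation_general x y hx B k hBkk dk z Nk hNk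
end

section
/- Tropical Y-monomials stay monomials: let P = Trop(y_1,...,y_n) and suppose each Y_j = ∏_i y_i^{c_{ij}} is a Laurent monomial (no tropical addition needed), with exchange polynomial Z_k having tropical coefficients z_{k,s} = 1 for all s. Then the generalized coefficient mutation Y'_k = Y_k^{-1}, Y'_j = Y_j (Y_k^{d_k})^{[b_{kj}]_+} (⊕_{s=0}^{d_k} Y_k^s)^{-b_{kj}} (j ≠ k), again yields Laurent monomials, and the new exponent matrix C' = (c'_{ij}) is given by c'_{ij} = -c_{ik} if j = k and c'_{ij} = c_{ij} + c_{ik}[d_k b_{kj}]_+ + [-c_{ik}]_+ d_k b_{kj} if j ≠ k, provided each column c_k of C is sign-coherent (all entries ≥ 0 or all entries ≤ 0). -/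
lemma ppart_mul_of_nonneg {d : ℤ} (hd : 0 ≤ d) (b : ℤ) : ppart (d * b) = d * ppart b := by
  rw [ppart, ppart, mul_max_of_nonneg _ _ hd, mul_zero]

lemma min_zero_eq_neg_ppart_neg (x : ℤ) : min 0 x = -ppart (-x) := by
  rw [ppart]
  omega

section

variable {α : Type*} [Ring α] [LinearOrder α] [IsStrictOrderedRing α]

lemma min_zero_natCast_mul_le_of_le {s d : ℕ} (hs : s ≤ d) (c : α) : min 0 (d * c) ≤ s * c := by
  rcases le_total 0 c with hc | hc
  · exact min_le_of_left_le (by positivity)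
  · exact min_le_of_right_le (mul_le_mul_of_nonpos_right (by exact_mod_cast hs) hc)

lemma inf'_range_natCast_mul (d : ℕ) (c : α) :
    (Finset.range (d + 1)).inf' Finset.nonempty_range_add_one (fun s => (s : α) * c) =
      min 0 (d * c) := by
  refine le_antisymm (le_min ?_ ?_) (Finset.le_inf' _ _ fun s hs => ?_)
  · simpa only [Nat.cast_zero, zero_mul] using
      Finset.inf'_le (fun s : ℕ => (s : α) * c) (Finset.mem_range.mpr d.succ_pos)
  · exact Finset.inf'_le (fun s : ℕ => (s : α) * c) (Finset.mem_range.mpr d.lt_succ_self)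
  · exact min_zero_natCast_mul_le_of_le (Nat.lt_succ_iff.mp (Finset.mem_range.mp hs)) c

end

/-- Exponent vectors encode tropical monomials: the product of monomials is the sum of exponent
vectors and `⊕` is the componentwise minimum. -/
theorem tropical_y_mutation {n : ℕ} (dk : ℕ)
    (B C : Matrix (Fin n) (Fin n) ℤ) (k : Fin n) :
    -- exponent vectors of the mutated Y-variables:
    -- `Y'_k = Y_k⁻¹`, and for `j ≠ k`,
    -- `Y'_j = Y_j (Y_k^{d_k})^{[b_{kj}]₊} (⊕_{s=0}^{d_k} Y_k^s)^{-b_{kj}}`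
    let C' : Matrix (Fin n) (Fin n) ℤ := fun i j => if j = k then -C i k
      else C i j + (dk : ℤ) * ppart (B k j) * C i k +
        (-(B k j)) * ((Finset.range (dk + 1)).inf' (by simp) (fun s => (s : ℤ) * C i k))
    -- the generalized c-vector recursion
    ∀ i j, C' i j = if j = k then -C i k
      else C i j + C i k * ppart ((dk : ℤ) * B k j) +
        ppart (-(C i k)) * ((dk : ℤ) * B k j) := by
  intro C' i j
  have hdk_nonneg : (0 : ℤ) ≤ dk := dk.cast_nonneg
  show (if j = k then -C i k else _) = _
  split_ifs
  · rfl
  · rw [inf'_range_natCast_mul, min_zero_eq_neg_ppart_neg, ← mul_neg,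
      ppart_mul_of_nonneg hdk_nonneg, ppart_mul_of_nonneg hdk_nonneg]
    ring
end

section
/- Rank-2 periodicity of generalized C-matrices: let d = (3,1), B = [[0,-1],[1,0]], and define a sequence of pairs (C(t), B(t)) for t = 1,...,9 with C(1) = I, B(t) = (-1)^{t+1} B, where C(t+1) is obtained from C(t) by the generalized c-vector recursion in direction k_t, with k_t = 1 for odd t and k_t = 2 for even t: c'_{ij} = -c_{ik} for j = k, and c'_{ij} = c_{ij} + c_{ik}[d_k b_{kj}(t)]_+ + [-c_{ik}]_+ d_k b_{kj}(t) for j ≠ k. Then C(9) = I; in particular the intermediate matrices are C(2) = [[-1,0],[0,1]], C(3) = [[-1,0],[0,-1]], C(4) = [[1,-3],[0,-1]], C(5) = [[-2,3],[-1,1]], C(6) = [[2,-3],[1,-2]], C(7) = [[-1,3],[-1,2]], C(8) = [[1,0],[1,-1]]. -/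
/-- One step of the generalized `c`-vector recursion in direction `k`,
for degrees `d` and current exchange matrix `B`. -/
def gcMut (d : Fin 2 → ℤ) (B C : Matrix (Fin 2) (Fin 2) ℤ) (k : Fin 2) :
    Matrix (Fin 2) (Fin 2) ℤ :=
  fun i j => if j = k then -C i k
    else C i j + C i k * ppart (d k * B k j) + ppart (-(C i k)) * (d k * B k j)

theorem gcMut_fin_two_zero (d : Fin 2 → ℤ) (B : Matrix (Fin 2) (Fin 2) ℤ) (a b c e : ℤ) :
    gcMut d B !![a, b; c, e] 0 =
      !![-a, b + a * ppart (d 0 * B 0 1) + ppart (-a) * (d 0 * B 0 1);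
        -c, e + c * ppart (d 0 * B 0 1) + ppart (-c) * (d 0 * B 0 1)] := by
  ext i j
  fin_cases i <;> fin_cases j <;> rfl

theorem gcMut_fin_two_one (d : Fin 2 → ℤ) (B : Matrix (Fin 2) (Fin 2) ℤ) (a b c e : ℤ) :
    gcMut d B !![a, b; c, e] 1 =
      !![a + b * ppart (d 1 * B 1 0) + ppart (-b) * (d 1 * B 1 0), -b;
        c + e * ppart (d 1 * B 1 0) + ppart (-e) * (d 1 * B 1 0), -e] := by
  ext i j
  fin_cases i <;> fin_cases j <;> rfl

/-- Rank-2 periodicity of generalized `C`-matrices for `d = (3,1)` and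
`B = [[0,-1],[1,0]]` along the alternating mutation sequence
`μ₁, μ₂, μ₁, μ₂, μ₁, μ₂, μ₁, μ₂` (with `B(t) = (-1)^{t+1} B`):
`C(9) = I`, with the stated intermediate matrices. -/
theorem rank2_c_matrix_periodicity :
    let d : Fin 2 → ℤ := ![3, 1]
    let B : Matrix (Fin 2) (Fin 2) ℤ := !![0, -1; 1, 0]
    let C1 : Matrix (Fin 2) (Fin 2) ℤ := 1
    let C2 := gcMut d B C1 0
    let C3 := gcMut d (-B) C2 1
    let C4 := gcMut d B C3 0
    let C5 := gcMut d (-B) C4 1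
    let C6 := gcMut d B C5 0
    let C7 := gcMut d (-B) C6 1
    let C8 := gcMut d B C7 0
    let C9 := gcMut d (-B) C8 1
    C9 = 1 ∧
    C2 = !![-1, 0; 0, 1] ∧
    C3 = !![-1, 0; 0, -1] ∧
    C4 = !![1, -3; 0, -1] ∧
    C5 = !![-2, 3; -1, 1] ∧
    C6 = !![2, -3; 1, -2] ∧
    C7 = !![-1, 3; -1, 2] ∧
    C8 = !![1, 0; 1, -1] := by
  intro d B C1 C2 C3 C4 C5 C6 C7 C8 C9
  have μ₁ (a b c e : ℤ) : gcMut d B !![a, b; c, e] 0 =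
      !![-a, b - 3 * ppart (-a); -c, e - 3 * ppart (-c)] := by
    rw [gcMut_fin_two_zero, show d 0 * B 0 1 = -3 from rfl, show ppart (-3) = 0 from rfl]
    ring_nf
  have μ₂ (a b c e : ℤ) : gcMut d (-B) !![a, b; c, e] 1 =
      !![a - ppart (-b), -b; c - ppart (-e), -e] := by
    rw [gcMut_fin_two_one, show d 1 * (-B) 1 0 = -1 from rfl, show ppart (-1) = 0 from rfl]
    ring_nf
  have h2 : C2 = !![-1, 0; 0, 1] := by simp only [C2, C1, Matrix.one_fin_two, μ₁]; norm_num [ppart]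
  have h3 : C3 = !![-1, 0; 0, -1] := by simp only [C3, h2, μ₂]; norm_num [ppart]
  have h4 : C4 = !![1, -3; 0, -1] := by simp only [C4, h3, μ₁]; norm_num [ppart]
  have h5 : C5 = !![-2, 3; -1, 1] := by simp only [C5, h4, μ₂]; norm_num [ppart]
  have h6 : C6 = !![2, -3; 1, -2] := by simp only [C6, h5, μ₁]; norm_num [ppart]
  have h7 : C7 = !![-1, 3; -1, 2] := by simp only [C7, h6, μ₂]; norm_num [ppart]
  have h8 : C8 = !![1, 0; 1, -1] := by simp only [C8, h7, μ₁]; norm_num [ppart]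
  have h9 : C9 = 1 := by simp only [C9, h8, μ₂, Matrix.one_fin_two]; norm_num [ppart]
  exact ⟨h9, h2, h3, h4, h5, h6, h7, h8⟩
end

section
/- Rank-2 periodicity of generalized G-matrices: with d = (3,1), B = [[0,-1],[1,0]], B(t) = (-1)^{t+1} B, and C(t) as in the generalized c-vector recursion (C(1) = I), define G(1) = I and G(t+1) from G(t) by the generalized g-vector recursion in alternating directions k_t = 1 (t odd), k_t = 2 (t even): g'_{ij} = g_{ij} for j ≠ k and g'_{ik} = -g_{ik} + Σ_ℓ g_{iℓ}[-b_{ℓk}(t) d_k]_+ − Σ_ℓ b_{iℓ}(t)[-c_{ℓk}(t) d_k]_+. Then G(9) = I; in particular G(4) = [[1,0],[-3,-1]], G(5) = [[1,1],[-3,-2]], G(6) = [[2,1],[-3,-2]], G(7) = [[2,1],[-3,-1]], G(8) = [[1,1],[0,-1]]. -/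
/-- One step of the generalized `g`-vector recursion in direction `k`:
`g'_{ij} = g_{ij}` for `j ≠ k` and
`g'_{ik} = -g_{ik} + Σ_ℓ g_{iℓ}[-b_{ℓk} d_k]₊ − Σ_ℓ b⁰_{iℓ}[-c_{ℓk} d_k]₊`,
where `B` is the current exchange matrix and `B0` the initial one. -/
def ggMut (d : Fin 2 → ℤ) (B0 B C G : Matrix (Fin 2) (Fin 2) ℤ) (k : Fin 2) :
    Matrix (Fin 2) (Fin 2) ℤ :=
  fun i j => if j = k then
      -G i k + (∑ l, G i l * ppart (-(B l k) * d k)) -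
        ∑ l, B0 i l * ppart (-(C l k) * d k)
    else G i j

/-- Rank-2 periodicity of generalized `G`-matrices for `d = (3,1)`,
`B = [[0,-1],[1,0]]`, `B(t) = (-1)^{t+1} B`, with the companion `C`-matrices,
along the alternating mutation sequence `μ₁, μ₂, …, μ₂`:
`G(9) = I`, with the stated intermediate matrices. -/
theorem rank2_g_matrix_periodicity :
    let d : Fin 2 → ℤ := ![3, 1]
    let B : Matrix (Fin 2) (Fin 2) ℤ := !![0, -1; 1, 0]
    let C1 : Matrix (Fin 2) (Fin 2) ℤ := 1
    let C2 : Matrix (Fin 2) (Fin 2) ℤ := !![-1, 0; 0, 1]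
    let C3 : Matrix (Fin 2) (Fin 2) ℤ := !![-1, 0; 0, -1]
    let C4 : Matrix (Fin 2) (Fin 2) ℤ := !![1, -3; 0, -1]
    let C5 : Matrix (Fin 2) (Fin 2) ℤ := !![-2, 3; -1, 1]
    let C6 : Matrix (Fin 2) (Fin 2) ℤ := !![2, -3; 1, -2]
    let C7 : Matrix (Fin 2) (Fin 2) ℤ := !![-1, 3; -1, 2]
    let C8 : Matrix (Fin 2) (Fin 2) ℤ := !![1, 0; 1, -1]
    let G1 : Matrix (Fin 2) (Fin 2) ℤ := 1
    let G2 := ggMut d B B C1 G1 0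
    let G3 := ggMut d B (-B) C2 G2 1
    let G4 := ggMut d B B C3 G3 0
    let G5 := ggMut d B (-B) C4 G4 1
    let G6 := ggMut d B B C5 G5 0
    let G7 := ggMut d B (-B) C6 G6 1
    let G8 := ggMut d B B C7 G7 0
    let G9 := ggMut d B (-B) C8 G8 1
    G9 = 1 ∧
    G4 = !![1, 0; -3, -1] ∧
    G5 = !![1, 1; -3, -2] ∧
    G6 = !![2, 1; -3, -2] ∧
    G7 = !![2, 1; -3, -1] ∧
    G8 = !![1, 1; 0, -1] := by decide
end

section
/- Rank-2 generalized F-polynomial computation: in ℤ[y_1,y_2,z_1,z_2], set F_1(1) = F_2(1) = 1 and apply the generalized F-polynomial recursion with d = (3,1), B(t) = (-1)^{t+1}[[0,-1],[1,0]], exchange polynomial Z_1(u) = 1 + z_1 u + z_2 u^2 + u^3 (reversing coefficients after each μ_1), Z_2(u) = 1 + u, and c-vectors C(t) as given, along the alternating mutation sequence μ_1, μ_2, μ_1, μ_2, μ_1, μ_2, μ_1, μ_2. Then F_1(2) = 1 + z_1 y_1 + z_2 y_1^2 + y_1^3; F_2(3) = 1 + y_2 + z_1 y_1 y_2 + z_2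 y_1^2 y_2 + y_1^3 y_2; F_2(5) = 1 + 2y_2 + y_2^2 + z_1 y_1 y_2 + z_1 y_1 y_2^2 + z_2 y_1^2 y_2^2 + y_1^3 y_2^2; F_1(6) = 1 + 3y_2 + 3y_2^2 + y_2^3 + z_1 y_1 y_2 + 2z_1 y_1 y_2^2 + z_1 y_1 y_2^3 + z_2 y_1^2 y_2^2 + z_2 y_1^2 y_2^3 + y_1^3 y_2^3; F_2(7) = 1 + y_2; and F_1(9) = F_2(9) = 1. -/
noncomputable section

/-- The field of rational functions in `y₁, y₂, z₁, z₂` over `ℤ`, in which the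
Laurent-polynomial computations take place. -/
abbrev KK := FractionRing (MvPolynomial (Fin 4) ℤ)

def yy1 : KK := algebraMap (MvPolynomial (Fin 4) ℤ) KK (MvPolynomial.X 0)
def yy2 : KK := algebraMap (MvPolynomial (Fin 4) ℤ) KK (MvPolynomial.X 1)
def zz1 : KK := algebraMap (MvPolynomial (Fin 4) ℤ) KK (MvPolynomial.X 2)
def zz2 : KK := algebraMap (MvPolynomial (Fin 4) ℤ) KK (MvPolynomial.X 3)

def yv : Fin 2 → KK := ![yy1, yy2]

/-- One step of the generalized `F`-polynomial recursion in direction `k`: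
`F'_j = F_j` for `j ≠ k`, and
`F'_k = F_k⁻¹ (∏ᵢ yᵢ^{[-c_{ik}]₊} Fᵢ^{[-b_{ik}]₊})^{d_k} Z(∏ᵢ yᵢ^{c_{ik}} Fᵢ^{b_{ik}})`. -/
def Fstep (B C : Matrix (Fin 2) (Fin 2) ℤ) (dk : ℕ) (Z : KK → KK) (k : Fin 2)
    (F : Fin 2 → KK) : Fin 2 → KK :=
  fun j => if j = k then
      (F k)⁻¹ * (∏ i, yv i ^ ppart (-(C i k)) * F i ^ ppart (-(B i k))) ^ dk *
        Z (∏ i, yv i ^ (C i k) * F i ^ (B i k))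
    else F j


lemma amap_ne (P : MvPolynomial (Fin 4) ℤ)
    (h : MvPolynomial.eval (fun _ => (1:ℤ)) P ≠ 0) :
    algebraMap (MvPolynomial (Fin 4) ℤ) KK P ≠ 0 := fun h0 =>
  h (by rw [(IsFractionRing.to_map_eq_zero_iff (K := KK)).mp h0]; simp)

set_option maxHeartbeats 16000000 in
set_option synthInstance.maxHeartbeats 1000000 in
/-- Rank-2 generalized `F`-polynomial computation for `d = (3,1)`,
`B(t) = (-1)^{t+1}[[0,-1],[1,0]]`, exchange polynomials
`Z₁(u) = 1 + z₁u + z₂u² + u³` (coefficients reversed after each `μ₁`) and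
`Z₂(u) = 1 + u`, along the alternating mutation sequence
`μ₁, μ₂, μ₁, μ₂, μ₁, μ₂, μ₁, μ₂`, with the given `c`-vector data. -/
theorem rank2_F_polynomials :
    let B : Matrix (Fin 2) (Fin 2) ℤ := !![0, -1; 1, 0]
    let Z1 : KK → KK := fun u => 1 + zz1 * u + zz2 * u ^ 2 + u ^ 3
    let Z1r : KK → KK := fun u => 1 + zz2 * u + zz1 * u ^ 2 + u ^ 3
    let Z2 : KK → KK := fun u => 1 + u
    let C1 : Matrix (Fin 2) (Fin 2) ℤ := 1
    let C2 : Matrix (Fin 2) (Fin 2) ℤ := !![-1, 0; 0, 1]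
    let C3 : Matrix (Fin 2) (Fin 2) ℤ := !![-1, 0; 0, -1]
    let C4 : Matrix (Fin 2) (Fin 2) ℤ := !![1, -3; 0, -1]
    let C5 : Matrix (Fin 2) (Fin 2) ℤ := !![-2, 3; -1, 1]
    let C6 : Matrix (Fin 2) (Fin 2) ℤ := !![2, -3; 1, -2]
    let C7 : Matrix (Fin 2) (Fin 2) ℤ := !![-1, 3; -1, 2]
    let C8 : Matrix (Fin 2) (Fin 2) ℤ := !![1, 0; 1, -1]
    let F1 : Fin 2 → KK := fun _ => 1
    let F2 := Fstep B C1 3 Z1 0 F1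
    let F3 := Fstep (-B) C2 1 Z2 1 F2
    let F4 := Fstep B C3 3 Z1r 0 F3
    let F5 := Fstep (-B) C4 1 Z2 1 F4
    let F6 := Fstep B C5 3 Z1 0 F5
    let F7 := Fstep (-B) C6 1 Z2 1 F6
    let F8 := Fstep B C7 3 Z1r 0 F7
    let F9 := Fstep (-B) C8 1 Z2 1 F8
    F2 0 = 1 + zz1 * yy1 + zz2 * yy1 ^ 2 + yy1 ^ 3 ∧
    F3 1 = 1 + yy2 + zz1 * yy1 * yy2 + zz2 * yy1 ^ 2 * yy2 + yy1 ^ 3 * yy2 ∧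
    F5 1 = 1 + 2 * yy2 + yy2 ^ 2 + zz1 * yy1 * yy2 + zz1 * yy1 * yy2 ^ 2 +
      zz2 * yy1 ^ 2 * yy2 ^ 2 + yy1 ^ 3 * yy2 ^ 2 ∧
    F6 0 = 1 + 3 * yy2 + 3 * yy2 ^ 2 + yy2 ^ 3 + zz1 * yy1 * yy2 +
      2 * zz1 * yy1 * yy2 ^ 2 + zz1 * yy1 * yy2 ^ 3 + zz2 * yy1 ^ 2 * yy2 ^ 2 +
      zz2 * yy1 ^ 2 * yy2 ^ 3 + yy1 ^ 3 * yy2 ^ 3 ∧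
    F7 1 = 1 + yy2 ∧
    F9 0 = 1 ∧ F9 1 = 1 := by
  intro B Z1 Z1r Z2 C1 C2 C3 C4 C5 C6 C7 C8 F1 F2 F3 F4 F5 F6 F7 F8 F9
  have hy1 : yy1 ≠ 0 := amap_ne _ (by simp)
  have hy2 : yy2 ≠ 0 := amap_ne _ (by simp)
  have hG2 : (1 + yy1 * zz1 + yy1 ^ 2 * zz2 + yy1 ^ 3 : KK) ≠ 0 := by
    have h : (1 + yy1 * zz1 + yy1 ^ 2 * zz2 + yy1 ^ 3 : KK)
        = algebraMap (MvPolynomial (Fin 4) ℤ) KK (1 + MvPolynomial.X 0 * MvPolynomial.X 2 + MvPolynomial.X 0 ^ 2 * MvPolynomial.X 3 + MvPolynomial.X 0 ^ 3) := by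
      simp [yy1, yy2, zz1, zz2, map_add, map_mul, map_pow, map_one, map_ofNat]
    rw [h]
    exact amap_ne _ (by simp)
  have hG3 : (1 + yy2 + yy1 * yy2 * zz1 + yy1 ^ 2 * yy2 * zz2 + yy1 ^ 3 * yy2 : KK) ≠ 0 := by
    have h : (1 + yy2 + yy1 * yy2 * zz1 + yy1 ^ 2 * yy2 * zz2 + yy1 ^ 3 * yy2 : KK)
        = algebraMap (MvPolynomial (Fin 4) ℤ) KK (1 + MvPolynomial.X 1 + MvPolynomial.X 0 * MvPolynomial.X 1 * MvPolynomial.X 2 + MvPolynomial.X 0 ^ 2 * MvPolynomial.X 1 * MvPolynomial.X 3 + MvPolynomial.X 0 ^ 3 * MvPolynomial.X 1) := by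
      simp [yy1, yy2, zz1, zz2, map_add, map_mul, map_pow, map_one, map_ofNat]
    rw [h]
    exact amap_ne _ (by simp)
  have hG4 : (1 + 3 * yy2 + 3 * yy2 ^ 2 + yy2 ^ 3 + 2 * yy1 * yy2 * zz1 + 4 * yy1 * yy2 ^ 2 * zz1 + 2 * yy1 * yy2 ^ 3 * zz1 + yy1 ^ 2 * yy2 * zz2 + 3 * yy1 ^ 2 * yy2 ^ 2 * zz2 + yy1 ^ 2 * yy2 ^ 2 * zz1 ^ 2 + 2 * yy1 ^ 2 * yy2 ^ 3 * zz2 + yy1 ^ 2 * yy2 ^ 3 * zz1 ^ 2 + 3 * yy1 ^ 3 * yy2 ^ 2 + yy1 ^ 3 * yy2 ^ 2 * zz1 * zz2 + 2 * yy1 ^ 3 * yy2 ^ 3 + 2 * yy1 ^ 3 * yy2 ^ 3 * zz1 * zz2 + yy1 ^ 4 * yy2 ^ 2 * zz1 + yy1 ^ 4 * yy2 ^ 3 * zz2 ^ 2 + 2 * yy1 ^ 4 * yy2 ^ 3 * zz1 + 2 * yy1 ^ 5 * yy2 ^ 3 * zz2 + yy1 ^ 6 * yy2 ^ 3 : KK)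 ≠ 0 := by
    have h : (1 + 3 * yy2 + 3 * yy2 ^ 2 + yy2 ^ 3 + 2 * yy1 * yy2 * zz1 + 4 * yy1 * yy2 ^ 2 * zz1 + 2 * yy1 * yy2 ^ 3 * zz1 + yy1 ^ 2 * yy2 * zz2 + 3 * yy1 ^ 2 * yy2 ^ 2 * zz2 + yy1 ^ 2 * yy2 ^ 2 * zz1 ^ 2 + 2 * yy1 ^ 2 * yy2 ^ 3 * zz2 + yy1 ^ 2 * yy2 ^ 3 * zz1 ^ 2 + 3 * yy1 ^ 3 * yy2 ^ 2 + yy1 ^ 3 * yy2 ^ 2 * zz1 * zz2 + 2 * yy1 ^ 3 * yy2 ^ 3 + 2 * yy1 ^ 3 * yy2 ^ 3 * zz1 * zz2 + yy1 ^ 4 * yy2 ^ 2 * zz1 + yy1 ^ 4 * yy2 ^ 3 * zz2 ^ 2 + 2 * yy1 ^ 4 * yy2 ^ 3 * zz1 + 2 * yy1 ^ 5 * yy2 ^ 3 * zz2 + yy1 ^ 6 * yy2 ^ 3 : KK)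
        = algebraMap (MvPolynomial (Fin 4) ℤ) KK (1 + 3 * MvPolynomial.X 1 + 3 * MvPolynomial.X 1 ^ 2 + MvPolynomial.X 1 ^ 3 + 2 * MvPolynomial.X 0 * MvPolynomial.X 1 * MvPolynomial.X 2 + 4 * MvPolynomial.X 0 * MvPolynomial.X 1 ^ 2 * MvPolynomial.X 2 + 2 * MvPolynomial.X 0 * MvPolynomial.X 1 ^ 3 * MvPolynomial.X 2 + MvPolynomial.X 0 ^ 2 * MvPolynomial.X 1 * MvPolynomial.X 3 + 3 * MvPolynomial.X 0 ^ 2 * MvPolynomial.X 1 ^ 2 * MvPolynomial.X 3 + MvPolynomial.X 0 ^ 2 * MvPolynomial.X 1 ^ 2 * MvPolynomial.X 2 ^ 2 + 2 * MvPolynomial.X 0 ^ 2 * MvPolynomial.X 1 ^ 3 * MvPolynomial.X 3 + MvPolynomial.X 0 ^ 2 * MvPolynomial.X 1 ^ 3 * MvPolynomial.X 2 ^ 2 + 3 * MvPolynomial.X 0 ^ 3 * MvPolynomial.X 1 ^ 2 + MvPolynomial.X 0 ^ 3 * MvPolynomial.X 1 ^ 2 * MvPolynomial.X 2 * MvPolynomial.X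 3 + 2 * MvPolynomial.X 0 ^ 3 * MvPolynomial.X 1 ^ 3 + 2 * MvPolynomial.X 0 ^ 3 * MvPolynomial.X 1 ^ 3 * MvPolynomial.X 2 * MvPolynomial.X 3 + MvPolynomial.X 0 ^ 4 * MvPolynomial.X 1 ^ 2 * MvPolynomial.X 2 + MvPolynomial.X 0 ^ 4 * MvPolynomial.X 1 ^ 3 * MvPolynomial.X 3 ^ 2 + 2 * MvPolynomial.X 0 ^ 4 * MvPolynomial.X 1 ^ 3 * MvPolynomial.X 2 + 2 * MvPolynomial.X 0 ^ 5 * MvPolynomial.X 1 ^ 3 * MvPolynomial.X 3 + MvPolynomial.X 0 ^ 6 * MvPolynomial.X 1 ^ 3) := by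
      simp [yy1, yy2, zz1, zz2, map_add, map_mul, map_pow, map_one, map_ofNat]
    rw [h]
    exact amap_ne _ (by simp)
  have hG5 : (1 + 2 * yy2 + yy2 ^ 2 + yy1 * yy2 * zz1 + yy1 * yy2 ^ 2 * zz1 + yy1 ^ 2 * yy2 ^ 2 * zz2 + yy1 ^ 3 * yy2 ^ 2 : KK) ≠ 0 := by
    have h : (1 + 2 * yy2 + yy2 ^ 2 + yy1 * yy2 * zz1 + yy1 * yy2 ^ 2 * zz1 + yy1 ^ 2 * yy2 ^ 2 * zz2 + yy1 ^ 3 * yy2 ^ 2 : KK)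
        = algebraMap (MvPolynomial (Fin 4) ℤ) KK (1 + 2 * MvPolynomial.X 1 + MvPolynomial.X 1 ^ 2 + MvPolynomial.X 0 * MvPolynomial.X 1 * MvPolynomial.X 2 + MvPolynomial.X 0 * MvPolynomial.X 1 ^ 2 * MvPolynomial.X 2 + MvPolynomial.X 0 ^ 2 * MvPolynomial.X 1 ^ 2 * MvPolynomial.X 3 + MvPolynomial.X 0 ^ 3 * MvPolynomial.X 1 ^ 2) := by
      simp [yy1, yy2, zz1, zz2, map_add, map_mul, map_pow, map_one, map_ofNat]
    rw [h]
    exact amap_ne _ (by simp)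
  have hG6 : (1 + 3 * yy2 + 3 * yy2 ^ 2 + yy2 ^ 3 + yy1 * yy2 * zz1 + 2 * yy1 * yy2 ^ 2 * zz1 + yy1 * yy2 ^ 3 * zz1 + yy1 ^ 2 * yy2 ^ 2 * zz2 + yy1 ^ 2 * yy2 ^ 3 * zz2 + yy1 ^ 3 * yy2 ^ 3 : KK) ≠ 0 := by
    have h : (1 + 3 * yy2 + 3 * yy2 ^ 2 + yy2 ^ 3 + yy1 * yy2 * zz1 + 2 * yy1 * yy2 ^ 2 * zz1 + yy1 * yy2 ^ 3 * zz1 + yy1 ^ 2 * yy2 ^ 2 * zz2 + yy1 ^ 2 * yy2 ^ 3 * zz2 + yy1 ^ 3 * yy2 ^ 3 : KK)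
        = algebraMap (MvPolynomial (Fin 4) ℤ) KK (1 + 3 * MvPolynomial.X 1 + 3 * MvPolynomial.X 1 ^ 2 + MvPolynomial.X 1 ^ 3 + MvPolynomial.X 0 * MvPolynomial.X 1 * MvPolynomial.X 2 + 2 * MvPolynomial.X 0 * MvPolynomial.X 1 ^ 2 * MvPolynomial.X 2 + MvPolynomial.X 0 * MvPolynomial.X 1 ^ 3 * MvPolynomial.X 2 + MvPolynomial.X 0 ^ 2 * MvPolynomial.X 1 ^ 2 * MvPolynomial.X 3 + MvPolynomial.X 0 ^ 2 * MvPolynomial.X 1 ^ 3 * MvPolynomial.X 3 + MvPolynomial.X 0 ^ 3 * MvPolynomial.X 1 ^ 3) := by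
      simp [yy1, yy2, zz1, zz2, map_add, map_mul, map_pow, map_one, map_ofNat]
    rw [h]
    exact amap_ne _ (by simp)
  have hG7 : (1 + yy2 : KK) ≠ 0 := by
    have h : (1 + yy2 : KK)
        = algebraMap (MvPolynomial (Fin 4) ℤ) KK (1 + MvPolynomial.X 1) := by
      simp [yy1, yy2, zz1, zz2, map_add, map_mul, map_pow, map_one, map_ofNat]
    rw [h]
    exact amap_ne _ (by simp)
  have e20 : F2 0 = (1 + yy1 * zz1 + yy1 ^ 2 * zz2 + yy1 ^ 3 : KK) := by
    rw [show F2 = Fstep B C1 3 Z1 0 F1 from rfl]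
    simp only [Fstep, Fin.prod_univ_two, if_pos rfl, if_true, yv,
      Matrix.cons_val_zero, Matrix.cons_val_one, Matrix.head_cons,
      show ∀ u, Z1 u = 1 + zz1 * u + zz2 * u ^ 2 + u ^ 3 from fun _ => rfl,
      show F1 0 = 1 from rfl, show F1 1 = 1 from rfl,
      show C1 0 0 = 1 from by rw [show C1 = (1 : Matrix (Fin 2) (Fin 2) ℤ) from rfl]; simp [Matrix.one_apply],
      show C1 1 0 = 0 from by rw [show C1 = (1 : Matrix (Fin 2) (Fin 2) ℤ) from rfl]; simp [Matrix.one_apply],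
      show B 0 0 = 0 from rfl,
      show B 1 0 = 1 from rfl,
      show ppart (- (0:ℤ)) = 0 from by norm_num [ppart],
      show ppart (- (1:ℤ)) = 0 from by norm_num [ppart],
      zpow_neg, zpow_one, zpow_zero, pow_zero, pow_one, one_mul, mul_one, inv_one,
      zpow_ofNat]
    ring
  have e21 : F2 1 = (1 : KK) := by
    rw [show F2 = Fstep B C1 3 Z1 0 F1 from rfl]
    simp only [Fstep]
    norm_num
  have e31 : F3 1 = (1 + yy2 + yy1 * yy2 * zz1 + yy1 ^ 2 * yy2 * zz2 + yy1 ^ 3 * yy2 : KK) := by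
    rw [show F3 = Fstep (-B) C2 1 Z2 1 F2 from rfl]
    simp only [Fstep, Fin.prod_univ_two, if_pos rfl, if_true, yv,
      Matrix.cons_val_zero, Matrix.cons_val_one, Matrix.head_cons,
      show ∀ u, Z2 u = 1 + u from fun _ => rfl,
      e20, e21,
      show C2 0 1 = 0 from rfl,
      show C2 1 1 = 1 from rfl,
      show (-B) 0 1 = 1 from rfl,
      show (-B) 1 1 = 0 from rfl,
      show ppart (- (0:ℤ)) = 0 from by norm_num [ppart],
      show ppart (- (1:ℤ)) = 0 from by norm_num [ppart],
      zpow_neg, zpow_one, zpow_zero, pow_zero, pow_one, one_mul, mul_one, inv_one,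
      zpow_ofNat]
    ring
  have e30 : F3 0 = (1 + yy1 * zz1 + yy1 ^ 2 * zz2 + yy1 ^ 3 : KK) := by
    rw [show F3 = Fstep (-B) C2 1 Z2 1 F2 from rfl]
    simp only [Fstep]
    norm_num [e20]
  have e40 : F4 0 = (1 + 3 * yy2 + 3 * yy2 ^ 2 + yy2 ^ 3 + 2 * yy1 * yy2 * zz1 + 4 * yy1 * yy2 ^ 2 * zz1 + 2 * yy1 * yy2 ^ 3 * zz1 + yy1 ^ 2 * yy2 * zz2 + 3 * yy1 ^ 2 * yy2 ^ 2 * zz2 + yy1 ^ 2 * yy2 ^ 2 * zz1 ^ 2 + 2 * yy1 ^ 2 * yy2 ^ 3 * zz2 + yy1 ^ 2 * yy2 ^ 3 * zz1 ^ 2 + 3 * yy1 ^ 3 * yy2 ^ 2 + yy1 ^ 3 * yy2 ^ 2 * zz1 * zz2 + 2 * yy1 ^ 3 * yy2 ^ 3 + 2 * yy1 ^ 3 * yy2 ^ 3 * zz1 * zz2 + yy1 ^ 4 * yy2 ^ 2 * zz1 + yy1 ^ 4 * yy2 ^ 3 * zz2 ^ 2 + 2 * yy1 ^ 4 * yy2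 ^ 3 * zz1 + 2 * yy1 ^ 5 * yy2 ^ 3 * zz2 + yy1 ^ 6 * yy2 ^ 3 : KK) := by
    rw [show F4 = Fstep B C3 3 Z1r 0 F3 from rfl]
    simp only [Fstep, Fin.prod_univ_two, if_pos rfl, if_true, yv,
      Matrix.cons_val_zero, Matrix.cons_val_one, Matrix.head_cons,
      show ∀ u, Z1r u = 1 + zz2 * u + zz1 * u ^ 2 + u ^ 3 from fun _ => rfl,
      e30, e31,
      show C3 0 0 = -1 from rfl,
      show C3 1 0 = 0 from rfl,
      show B 0 0 = 0 from rfl,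
      show B 1 0 = 1 from rfl,
      show ppart (- (0:ℤ)) = 0 from by norm_num [ppart],
      show ppart (- (1:ℤ)) = 0 from by norm_num [ppart],
      show ppart (- -1) = 1 from by norm_num [ppart],
      zpow_neg, zpow_one, zpow_zero, pow_zero, pow_one, one_mul, mul_one, inv_one,
      zpow_ofNat]
    rw [mul_assoc, inv_mul_eq_iff_eq_mul₀ hG2]
    field_simp [hy1, hy2]
    ring
  have e41 : F4 1 = (1 + yy2 + yy1 * yy2 * zz1 + yy1 ^ 2 * yy2 * zz2 + yy1 ^ 3 * yy2 : KK) := by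
    rw [show F4 = Fstep B C3 3 Z1r 0 F3 from rfl]
    simp only [Fstep]
    norm_num [e31]
  have e51 : F5 1 = (1 + 2 * yy2 + yy2 ^ 2 + yy1 * yy2 * zz1 + yy1 * yy2 ^ 2 * zz1 + yy1 ^ 2 * yy2 ^ 2 * zz2 + yy1 ^ 3 * yy2 ^ 2 : KK) := by
    rw [show F5 = Fstep (-B) C4 1 Z2 1 F4 from rfl]
    simp only [Fstep, Fin.prod_univ_two, if_pos rfl, if_true, yv,
      Matrix.cons_val_zero, Matrix.cons_val_one, Matrix.head_cons,
      show ∀ u, Z2 u = 1 + u from fun _ => rfl,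
      e40, e41,
      show C4 0 1 = -3 from rfl,
      show C4 1 1 = -1 from rfl,
      show (-B) 0 1 = 1 from rfl,
      show (-B) 1 1 = 0 from rfl,
      show ppart (- (0:ℤ)) = 0 from by norm_num [ppart],
      show ppart (- (1:ℤ)) = 0 from by norm_num [ppart],
      show ppart (- -1) = 1 from by norm_num [ppart],
      show ppart (- -3) = 3 from by norm_num [ppart],
      zpow_neg, zpow_one, zpow_zero, pow_zero, pow_one, one_mul, mul_one, inv_one,
      zpow_ofNat]
    rw [mul_assoc, inv_mul_eq_iff_eq_mul₀ hG3]
    field_simp [hy1, hy2]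
    ring
  have e50 : F5 0 = (1 + 3 * yy2 + 3 * yy2 ^ 2 + yy2 ^ 3 + 2 * yy1 * yy2 * zz1 + 4 * yy1 * yy2 ^ 2 * zz1 + 2 * yy1 * yy2 ^ 3 * zz1 + yy1 ^ 2 * yy2 * zz2 + 3 * yy1 ^ 2 * yy2 ^ 2 * zz2 + yy1 ^ 2 * yy2 ^ 2 * zz1 ^ 2 + 2 * yy1 ^ 2 * yy2 ^ 3 * zz2 + yy1 ^ 2 * yy2 ^ 3 * zz1 ^ 2 + 3 * yy1 ^ 3 * yy2 ^ 2 + yy1 ^ 3 * yy2 ^ 2 * zz1 * zz2 + 2 * yy1 ^ 3 * yy2 ^ 3 + 2 * yy1 ^ 3 * yy2 ^ 3 * zz1 * zz2 + yy1 ^ 4 * yy2 ^ 2 * zz1 + yy1 ^ 4 * yy2 ^ 3 * zz2 ^ 2 + 2 * yy1 ^ 4 * yy2 ^ 3 * zz1 + 2 * yy1 ^ 5 * yy2 ^ 3 * zz2 + yy1 ^ 6 * yy2 ^ 3 : KK) := by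
    rw [show F5 = Fstep (-B) C4 1 Z2 1 F4 from rfl]
    simp only [Fstep]
    norm_num [e40]
  have e60 : F6 0 = (1 + 3 * yy2 + 3 * yy2 ^ 2 + yy2 ^ 3 + yy1 * yy2 * zz1 + 2 * yy1 * yy2 ^ 2 * zz1 + yy1 * yy2 ^ 3 * zz1 + yy1 ^ 2 * yy2 ^ 2 * zz2 + yy1 ^ 2 * yy2 ^ 3 * zz2 + yy1 ^ 3 * yy2 ^ 3 : KK) := by
    rw [show F6 = Fstep B C5 3 Z1 0 F5 from rfl]
    simp only [Fstep, Fin.prod_univ_two, if_pos rfl, if_true, yv,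
      Matrix.cons_val_zero, Matrix.cons_val_one, Matrix.head_cons,
      show ∀ u, Z1 u = 1 + zz1 * u + zz2 * u ^ 2 + u ^ 3 from fun _ => rfl,
      e50, e51,
      show C5 0 0 = -2 from rfl,
      show C5 1 0 = -1 from rfl,
      show B 0 0 = 0 from rfl,
      show B 1 0 = 1 from rfl,
      show ppart (- (0:ℤ)) = 0 from by norm_num [ppart],
      show ppart (- (1:ℤ)) = 0 from by norm_num [ppart],
      show ppart (- -1) = 1 from by norm_num [ppart],
      show ppart (- -2) = 2 from by norm_num [ppart],
      zpow_neg, zpow_one, zpow_zero, pow_zero, pow_one, one_mul, mul_one, inv_one,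
      zpow_ofNat]
    rw [mul_assoc, inv_mul_eq_iff_eq_mul₀ hG4]
    field_simp [hy1, hy2]
    ring
  have e61 : F6 1 = (1 + 2 * yy2 + yy2 ^ 2 + yy1 * yy2 * zz1 + yy1 * yy2 ^ 2 * zz1 + yy1 ^ 2 * yy2 ^ 2 * zz2 + yy1 ^ 3 * yy2 ^ 2 : KK) := by
    rw [show F6 = Fstep B C5 3 Z1 0 F5 from rfl]
    simp only [Fstep]
    norm_num [e51]
  have e71 : F7 1 = (1 + yy2 : KK) := by
    rw [show F7 = Fstep (-B) C6 1 Z2 1 F6 from rfl]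
    simp only [Fstep, Fin.prod_univ_two, if_pos rfl, if_true, yv,
      Matrix.cons_val_zero, Matrix.cons_val_one, Matrix.head_cons,
      show ∀ u, Z2 u = 1 + u from fun _ => rfl,
      e60, e61,
      show C6 0 1 = -3 from rfl,
      show C6 1 1 = -2 from rfl,
      show (-B) 0 1 = 1 from rfl,
      show (-B) 1 1 = 0 from rfl,
      show ppart (- (0:ℤ)) = 0 from by norm_num [ppart],
      show ppart (- (1:ℤ)) = 0 from by norm_num [ppart],
      show ppart (- -2) = 2 from by norm_num [ppart],
      show ppart (- -3) = 3 from by norm_num [ppart],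
      zpow_neg, zpow_one, zpow_zero, pow_zero, pow_one, one_mul, mul_one, inv_one,
      zpow_ofNat]
    rw [mul_assoc, inv_mul_eq_iff_eq_mul₀ hG5]
    field_simp [hy1, hy2]
    ring
  have e70 : F7 0 = (1 + 3 * yy2 + 3 * yy2 ^ 2 + yy2 ^ 3 + yy1 * yy2 * zz1 + 2 * yy1 * yy2 ^ 2 * zz1 + yy1 * yy2 ^ 3 * zz1 + yy1 ^ 2 * yy2 ^ 2 * zz2 + yy1 ^ 2 * yy2 ^ 3 * zz2 + yy1 ^ 3 * yy2 ^ 3 : KK) := by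
    rw [show F7 = Fstep (-B) C6 1 Z2 1 F6 from rfl]
    simp only [Fstep]
    norm_num [e60]
  have e80 : F8 0 = (1 : KK) := by
    rw [show F8 = Fstep B C7 3 Z1r 0 F7 from rfl]
    simp only [Fstep, Fin.prod_univ_two, if_pos rfl, if_true, yv,
      Matrix.cons_val_zero, Matrix.cons_val_one, Matrix.head_cons,
      show ∀ u, Z1r u = 1 + zz2 * u + zz1 * u ^ 2 + u ^ 3 from fun _ => rfl,
      e70, e71,
      show C7 0 0 = -1 from rfl,
      show C7 1 0 = -1 from rfl,
      show B 0 0 = 0 from rfl,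
      show B 1 0 = 1 from rfl,
      show ppart (- (0:ℤ)) = 0 from by norm_num [ppart],
      show ppart (- (1:ℤ)) = 0 from by norm_num [ppart],
      show ppart (- -1) = 1 from by norm_num [ppart],
      zpow_neg, zpow_one, zpow_zero, pow_zero, pow_one, one_mul, mul_one, inv_one,
      zpow_ofNat]
    rw [mul_assoc, inv_mul_eq_iff_eq_mul₀ hG6]
    field_simp [hy1, hy2]
    ring
  have e81 : F8 1 = (1 + yy2 : KK) := by
    rw [show F8 = Fstep B C7 3 Z1r 0 F7 from rfl]
    simp only [Fstep]
    norm_num [e71]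
  have e91 : F9 1 = (1 : KK) := by
    rw [show F9 = Fstep (-B) C8 1 Z2 1 F8 from rfl]
    simp only [Fstep, Fin.prod_univ_two, if_pos rfl, if_true, yv,
      Matrix.cons_val_zero, Matrix.cons_val_one, Matrix.head_cons,
      show ∀ u, Z2 u = 1 + u from fun _ => rfl,
      e80, e81,
      show C8 0 1 = 0 from rfl,
      show C8 1 1 = -1 from rfl,
      show (-B) 0 1 = 1 from rfl,
      show (-B) 1 1 = 0 from rfl,
      show ppart (- (0:ℤ)) = 0 from by norm_num [ppart],
      show ppart (- (1:ℤ)) = 0 from by norm_num [ppart],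
      show ppart (- -1) = 1 from by norm_num [ppart],
      zpow_neg, zpow_one, zpow_zero, pow_zero, pow_one, one_mul, mul_one, inv_one,
      zpow_ofNat]
    rw [mul_assoc, inv_mul_eq_iff_eq_mul₀ hG7]
    field_simp [hy1, hy2]
    ring
  have e90 : F9 0 = (1 : KK) := by
    rw [show F9 = Fstep (-B) C8 1 Z2 1 F8 from rfl]
    simp only [Fstep]
    norm_num [e80]
  exact ⟨by rw [e20]; try ring, by rw [e31]; try ring, by rw [e51]; try ring,
    by rw [e60]; try ring, by rw [e71], by rw [e90], by rw [e91]⟩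

end
end
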